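/- arXiv:1607.02098 — 4 statements merged into one kernel-verified Lean document; each statement's English description precedes it below -/
import Mathlib

section
/- Let s = a + ib be a complex number with a = Re(s) > 0, let m > 0, and let A be a complex number with (1-s)A + m ≠ 0. Then |((1+s)A - m)/((1-s)A + m)| < 1 if and only if |A - m/(2a)| < m/(2a). -/
/-!
After squaring, `|(1 + s)A - m| < |(1 - s)A + m|` reads `Re s |A|² < m Re A` by the identity
`|(1 - s)A + m|² - |(1 + s)A - m|² = 4 (m Re A - Re s |A|²)`, while for `r > 0` the disk condition
`|A - r| < r` reads `|A|² < 2 r Re A`; for `r = m / (2 Re s)` the two agree.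
-/

open Complex

lemma normSq_one_sub_mul_add_sub_normSq_one_add_mul_sub (s A : ℂ) (m : ℝ) :
    normSq ((1 - s) * A + m) - normSq ((1 + s) * A - m) = 4 * (m * A.re - s.re * normSq A) := by
  simp only [normSq_apply, add_re, add_im, sub_re, sub_im, mul_re, mul_im, one_re, one_im,
    ofReal_re, ofReal_im]
  ring

lemma norm_sub_ofReal_lt_self_iff (A : ℂ) {r : ℝ} (hr : 0 < r) :
    ‖A - r‖ < r ↔ normSq A < 2 * r * A.re := by
  rw [← sq_lt_sq₀ (norm_nonneg _) hr.le, Complex.sq_norm, normSq_sub, normSq_ofReal]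
  simp only [conj_ofReal, mul_re, ofReal_re, ofReal_im]
  constructor <;> intro h <;> nlinarith

lemma norm_div_lt_one_iff_normSq_lt {z w : ℂ} (hw : w ≠ 0) :
    ‖z / w‖ < 1 ↔ normSq z < normSq w := by
  rw [norm_div, div_lt_one (norm_pos_iff.mpr hw), ← sq_lt_sq₀ (norm_nonneg _) (norm_nonneg _),
    Complex.sq_norm, Complex.sq_norm]

theorem stmt_2 (s : ℂ) (ha : 0 < s.re) (m : ℝ) (hm : 0 < m) (A : ℂ)
    (hden : (1 - s) * A + m ≠ 0) :
    ‖((1 + s) * A - m) / ((1 - s) * A + m)‖ < 1 ↔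
      ‖A - ((m / (2 * s.re) : ℝ) : ℂ)‖ < m / (2 * s.re) := by
  rw [norm_div_lt_one_iff_normSq_lt hden, norm_sub_ofReal_lt_self_iff A (by positivity),
    ← sub_pos, normSq_one_sub_mul_add_sub_normSq_one_add_mul_sub,
    show 2 * (m / (2 * s.re)) * A.re = m * A.re / s.re by field_simp, lt_div_iff₀ ha]
  constructor <;> intro h <;> linarith
end

section
/- Let s = a + ib be a complex number with a = Re(s) > 0, m > 0, 0 ≤ l < 1, and let A ∈ ℂ with (1-s)A + m ≠ 0. Then |((1+s)A - m)/((1-s)A + m)| ≤ l if and only if |A - m((1+l²) + a(1-l²) - ib(1-l²)) / (2a(1+l²) + (1-l²)(1+|s|²))| ≤ 2lm / (2a(1+l²) + (1-l²)(1+|s|²)). -/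
/-!
For `N = βA - m` and `D = αA + m`, the quantity `l²‖D‖² - ‖N‖²` is a real quadratic in `A` with
leading coefficient `-Q`, `Q = ‖β‖² - l²‖α‖²`. Completing the square gives
`Q (l²‖D‖² - ‖N‖²) = (l m ‖α + β‖)² - ‖Q A - m conj (l²α + β)‖²`.
With `α = 1 - s`, `β = 1 + s` one gets `‖α + β‖ = 2` and `Q = 2a(1 + l²) + (1 - l²)(1 + ‖s‖²)`,
which is positive when `a > 0` and `l < 1`, so `‖N / D‖ ≤ l` describes the stated disk.
-/

open Complex ComplexConjugate

theorem norm_div_le_iff_sq_le {𝕜 : Type*} [NormedDivisionRing 𝕜] {a b : 𝕜} {l : ℝ}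
    (hb : b ≠ 0) (hl : 0 ≤ l) : ‖a / b‖ ≤ l ↔ ‖a‖ ^ 2 ≤ (l * ‖b‖) ^ 2 := by
  rw [norm_div, div_le_iff₀ (norm_pos_iff.mpr hb)]
  exact (pow_le_pow_iff_left₀ (norm_nonneg _) (by positivity) two_ne_zero).symm

theorem Complex.norm_sub_div_le_div_iff_sq_le {a c : ℂ} {Q r : ℝ}
    (hQ : 0 < Q) (hr : 0 ≤ r) : ‖a - c / Q‖ ≤ r / Q ↔ ‖Q * a - c‖ ^ 2 ≤ r ^ 2 := by
  have hQ' : (Q : ℂ) ≠ 0 := ofReal_ne_zero.mpr hQ.ne'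
  rw [show a - c / Q = (Q * a - c) / Q by field_simp, norm_div, norm_real, Real.norm_eq_abs,
    abs_of_pos hQ, div_le_div_iff_of_pos_right hQ,
    pow_le_pow_iff_left₀ (norm_nonneg _) hr two_ne_zero]

theorem Complex.apollonius_identity (α β A : ℂ) (m l : ℝ) :
    (‖β‖ ^ 2 - l ^ 2 * ‖α‖ ^ 2) * ((l * ‖α * A + m‖) ^ 2 - ‖β * A - m‖ ^ 2) =
      (l * m * ‖α + β‖) ^ 2 -
        ‖((‖β‖ ^ 2 - l ^ 2 * ‖α‖ ^ 2 : ℝ) : ℂ) * A - m * conj (l ^ 2 * α + β)‖ ^ 2 := by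
  simp only [mul_pow, Complex.sq_norm, normSq_apply, mul_re, mul_im, add_re, add_im, sub_re,
    sub_im, ← ofReal_pow, ofReal_re, ofReal_im, conj_re, conj_im]
  ring

theorem Complex.mobius_disk_identity (s A : ℂ) (m l : ℝ) :
    (2 * s.re * (1 + l ^ 2) + (1 - l ^ 2) * (1 + ‖s‖ ^ 2)) *
        ((l * ‖(1 - s) * A + m‖) ^ 2 - ‖(1 + s) * A - m‖ ^ 2) =
      (2 * l * m) ^ 2 -
        ‖((2 * s.re * (1 + l ^ 2) + (1 - l ^ 2) * (1 + ‖s‖ ^ 2) : ℝ) : ℂ) * A -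
          m * (((1 + l ^ 2) + s.re * (1 - l ^ 2) : ℝ) - I * (s.im * (1 - l ^ 2)))‖ ^ 2 := by
  have hscale : ‖1 + s‖ ^ 2 - l ^ 2 * ‖1 - s‖ ^ 2 =
      2 * s.re * (1 + l ^ 2) + (1 - l ^ 2) * (1 + ‖s‖ ^ 2) := by
    simp only [Complex.sq_norm, normSq_apply, add_re, add_im, sub_re, sub_im, one_re, one_im]
    ring
  have hcenter : conj (l ^ 2 * (1 - s) + (1 + s)) =
      (((1 + l ^ 2) + s.re * (1 - l ^ 2) : ℝ) - I * (s.im * (1 - l ^ 2)) : ℂ) := by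
    apply Complex.ext <;> simp [← ofReal_pow] <;> ring
  have hsum : ‖(1 - s) + (1 + s)‖ = 2 := by norm_num
  have h := apollonius_identity (1 - s) (1 + s) A m l
  rwa [hscale, hcenter, hsum, show l * m * 2 = 2 * l * m by ring] at h

theorem stmt_3 (s : ℂ) (ha : 0 < s.re) (m l : ℝ) (hm : 0 < m) (hl0 : 0 ≤ l) (hl1 : l < 1)
    (A : ℂ) (hden : (1 - s) * A + m ≠ 0) :
    ‖((1 + s) * A - m) / ((1 - s) * A + m)‖ ≤ l ↔
      ‖A -
          (m : ℂ) * (((1 + l ^ 2) + s.re * (1 - l ^ 2) : ℝ) - Complex.I * (s.im * (1 - l ^ 2))) /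
            ((2 * s.re * (1 + l ^ 2) + (1 - l ^ 2) * (1 + ‖s‖ ^ 2) : ℝ) : ℂ)‖ ≤
        2 * l * m / (2 * s.re * (1 + l ^ 2) + (1 - l ^ 2) * (1 + ‖s‖ ^ 2)) := by
  have hQ : 0 < 2 * s.re * (1 + l ^ 2) + (1 - l ^ 2) * (1 + ‖s‖ ^ 2) := by
    have : 0 < 1 - l ^ 2 := by nlinarith
    positivity
  rw [norm_div_le_iff_sq_le hden hl0, norm_sub_div_le_div_iff_sq_le hQ (by positivity),
    ← sub_nonneg, ← mul_nonneg_iff_of_pos_left hQ, mobius_disk_identity, sub_nonneg]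
end

section
/- Let k ∈ (0,1), s ∈ ℂ with s ≠ 1 and a := Re(s) > 0, and set l₂ := (√(4a² + k²|s̄²-1|²) - 2a) / (k|s-1|²) and l₃ := (|s-1|² + k|s̄²-1|) / (|s̄²-1| + k|s-1|²). Then l₂ ≤ l₃. -/
/-!
Write `p = |s - 1|`, `q = |s + 1|` and `a = Re s`, so that `|s̄² - 1| = p q` and `q² = p² + 4a`.
Then `l₂` is the nonnegative root of the increasing quadratic `f(l) = k p² l² + 4a l - k q²`, while
`l₃ = (p + k q)/(q + k p)` and `f(l₃) (q + k p)² = (1 - k²) p q (q² - p²) ≥ 0`, so `l₂ ≤ l₃`.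
-/

open ComplexConjugate

/-- `√(b² + c d) - b` is `c` times the nonnegative root of `c x² + 2 b x - d`. -/
lemma sqrt_sq_add_mul_sub_le_of_quadratic_nonneg {b c d x : ℝ} (hb : 0 ≤ b) (hc : 0 ≤ c)
    (hx : 0 ≤ x) (hquad : 0 ≤ c * x ^ 2 + 2 * b * x - d) :
    Real.sqrt (b ^ 2 + c * d) - b ≤ c * x := by
  suffices Real.sqrt (b ^ 2 + c * d) ≤ c * x + b by linarith
  rw [Real.sqrt_le_iff]
  exact ⟨by positivity, by nlinarith [mul_nonneg hc hquad]⟩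

lemma quadratic_nonneg_at_div {k p q : ℝ} (hk0 : 0 ≤ k) (hk1 : k ≤ 1) (hp : 0 ≤ p) (hpq : p ≤ q)
    (hq : 0 < q) :
    0 ≤ k * p ^ 2 * ((p + k * q) / (q + k * p)) ^ 2 + (q ^ 2 - p ^ 2) * ((p + k * q) / (q + k * p))
      - k * q ^ 2 := by
  have hden : 0 < q + k * p := by positivity
  have hval : k * p ^ 2 * ((p + k * q) / (q + k * p)) ^ 2
      + (q ^ 2 - p ^ 2) * ((p + k * q) / (q + k * p)) - k * q ^ 2
      = (1 - k ^ 2) * p * q * (q ^ 2 - p ^ 2) / (q + k * p) ^ 2 := by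
    field_simp
    ring
  rw [hval]
  have h1k : 0 ≤ 1 - k ^ 2 := by nlinarith
  have hsq : 0 ≤ q ^ 2 - p ^ 2 := by nlinarith
  positivity

lemma Complex.norm_conj_sq_sub_one (s : ℂ) : ‖conj s ^ 2 - 1‖ = ‖s - 1‖ * ‖s + 1‖ := by
  rw [show conj s ^ 2 - 1 = conj ((s - 1) * (s + 1)) by simp; ring, Complex.norm_conj,
    norm_mul]

lemma Complex.norm_add_one_sq (s : ℂ) : ‖s + 1‖ ^ 2 = ‖s - 1‖ ^ 2 + 4 * s.re := by
  simp only [Complex.sq_norm, Complex.normSq_apply, Complex.add_re, Complex.sub_re,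
    Complex.add_im, Complex.sub_im, Complex.one_re, Complex.one_im]
  ring

theorem stmt_9 (k : ℝ) (hk0 : 0 < k) (hk1 : k < 1) (s : ℂ) (hs1 : s ≠ 1) (hre : 0 < s.re) :
    (Real.sqrt (4 * s.re ^ 2 + k ^ 2 * ‖(starRingEnd ℂ s) ^ 2 - 1‖ ^ 2) - 2 * s.re) /
        (k * ‖s - 1‖ ^ 2) ≤
      (‖s - 1‖ ^ 2 + k * ‖(starRingEnd ℂ s) ^ 2 - 1‖) /
        (‖(starRingEnd ℂ s) ^ 2 - 1‖ + k * ‖s - 1‖ ^ 2) := by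
  rw [Complex.norm_conj_sq_sub_one]
  set p := ‖s - 1‖
  set q := ‖s + 1‖
  have hp : 0 < p := norm_pos_iff.mpr (sub_ne_zero.mpr hs1)
  have h4a : q ^ 2 - p ^ 2 = 4 * s.re := by linarith [Complex.norm_add_one_sq s]
  have hpq : p ≤ q := by nlinarith [norm_nonneg (s + 1)]
  have hl₃ : (p ^ 2 + k * (p * q)) / (p * q + k * p ^ 2) = (p + k * q) / (q + k * p) := by
    rw [← mul_div_mul_left (p + k * q) (q + k * p) hp.ne']
    ring_nf
  have hquad := quadratic_nonneg_at_div hk0.le hk1.le hp.le hpq (hp.trans_le hpq)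
  rw [h4a] at hquad
  rw [hl₃, div_le_iff₀ (by positivity)]
  calc Real.sqrt (4 * s.re ^ 2 + k ^ 2 * (p * q) ^ 2) - 2 * s.re
      = Real.sqrt ((2 * s.re) ^ 2 + k * p ^ 2 * (k * q ^ 2)) - 2 * s.re := by ring_nf
    _ ≤ k * p ^ 2 * ((p + k * q) / (q + k * p)) :=
      sqrt_sq_add_mul_sub_le_of_quadratic_nonneg (by positivity) (by positivity) (by positivity)
        (by linarith)
    _ = (p + k * q) / (q + k * p) * (k * p ^ 2) := mul_comm _ _
end

section
/- Let α be a nonzero complex number, s = a + ib with a > 0 real and b real, m > 0, and suppose Re(m/α) > a. Define a₁(t) = e^{t(m/α - s)} · w(t)^{1/α} where w(t) = (1 + (a/c)h₀)e^{-mt} - (a/c)h₀ with c ∉ [0,∞), h₀ ∉ (-∞,0]. Then |a₁(t)| → ∞ as t → ∞. -/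
/-!
Since `m > 0`, `w(t) → -(a/c) h₀`, which is nonzero because `c ≠ 0` and `h₀ ≠ 0`. Writing
`‖w ^ z‖ = ‖w‖ ^ re z · exp (-arg w · im z)` with `|arg w| ≤ π`, the factor `w(t) ^ (1/α)` stays
bounded away from `0` even if the limit lies on the branch cut, while the exponential factor has
modulus `exp (t (Re (m/α) - a)) → ∞`.
-/

open Filter Topology Complex

theorem Complex.norm_rpow_re_mul_exp_le_norm_cpow {w : ℂ} (hw : w ≠ 0) (z : ℂ) :
    ‖w‖ ^ z.re * Real.exp (-(Real.pi * |z.im|)) ≤ ‖w ^ z‖ := by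
  rw [norm_cpow_of_ne_zero hw, div_eq_mul_inv, ← Real.exp_neg]
  refine mul_le_mul_of_nonneg_left (Real.exp_le_exp.mpr ?_) (by positivity)
  calc -(Real.pi * |z.im|) ≤ -(|arg w| * |z.im|) := by gcongr; exact abs_arg_le_pi w
    _ = -|arg w * z.im| := by rw [abs_mul]
    _ ≤ -(arg w * z.im) := neg_le_neg (le_abs_self _)

theorem Filter.Tendsto.atTop_mul_norm_cpow {ι : Type*} {l : Filter ι} {g : ι → ℝ} {f : ι → ℂ}
    {L : ℂ} (hg : Tendsto g l atTop) (hf : Tendsto f l (𝓝 L)) (hL : L ≠ 0) (z : ℂ) :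
    Tendsto (fun x => g x * ‖f x ^ z‖) l atTop := by
  have hnorm : Tendsto (fun x => ‖f x‖ ^ z.re * Real.exp (-(Real.pi * |z.im|))) l
      (𝓝 (‖L‖ ^ z.re * Real.exp (-(Real.pi * |z.im|)))) :=
    (hf.norm.rpow_const (Or.inl (norm_ne_zero_iff.mpr hL))).mul_const _
  have hpos : 0 < ‖L‖ ^ z.re * Real.exp (-(Real.pi * |z.im|)) := by
    have := norm_pos_iff.mpr hL
    positivity
  refine tendsto_atTop_mono' l ?_ (hg.atTop_mul_pos hpos hnorm)
  filter_upwards [hf.eventually_ne hL, hg.eventually_ge_atTop 0] with x hfx hgx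
  exact mul_le_mul_of_nonneg_left (norm_rpow_re_mul_exp_le_norm_cpow hfx z) hgx

theorem Complex.tendsto_norm_exp_ofReal_mul_atTop {ζ : ℂ} (hζ : 0 < ζ.re) :
    Tendsto (fun t : ℝ => ‖exp (t * ζ)‖) atTop atTop := by
  simp only [norm_exp, re_ofReal_mul]
  exact Real.tendsto_exp_atTop.comp (tendsto_id.atTop_mul_const hζ)

theorem Complex.tendsto_mul_exp_neg_mul_sub {m : ℝ} (hm : 0 < m) (A d : ℂ) :
    Tendsto (fun t : ℝ => A * ((Real.exp (-(m * t)) : ℝ) : ℂ) - d) atTop (𝓝 (-d)) := by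
  have hexp : Tendsto (fun t : ℝ => ((Real.exp (-(m * t)) : ℝ) : ℂ)) atTop (𝓝 0) := by
    rw [← ofReal_zero]
    exact continuous_ofReal.continuousAt.tendsto.comp
      (Real.tendsto_exp_neg_atTop_nhds_zero.comp (tendsto_id.const_mul_atTop hm))
  simpa using (hexp.const_mul A).sub_const d

theorem stmt_14_general (α : ℂ) (a b m : ℝ) (ha : 0 < a) (hm : 0 < m)
    (hre : ((m : ℂ) / α).re > a) (c h₀ : ℂ)
    (hc : ∀ r : ℝ, 0 ≤ r → c ≠ (r : ℂ)) (hh₀ : ∀ r : ℝ, r ≤ 0 → h₀ ≠ (r : ℂ)) :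
    Filter.Tendsto
      (fun t : ℝ =>
        norm
          (Complex.exp ((t : ℂ) * ((m : ℂ) / α - ((a : ℂ) + (b : ℂ) * Complex.I))) *
            ((1 + ((a : ℂ) / c) * h₀) * ((Real.exp (-(m * t)) : ℝ) : ℂ) - ((a : ℂ) / c) * h₀) ^
              ((1 : ℂ) / α)))
      Filter.atTop Filter.atTop := by
  have hd : (a : ℂ) / c * h₀ ≠ 0 :=
    mul_ne_zero (div_ne_zero (ofReal_ne_zero.mpr ha.ne') (by simpa using hc 0 le_rfl))
      (by simpa using hh₀ 0 le_rfl)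
  have hgrowth : 0 < ((m : ℂ) / α - ((a : ℂ) + (b : ℂ) * I)).re := by simpa using hre
  simp only [norm_mul]
  exact (tendsto_norm_exp_ofReal_mul_atTop hgrowth).atTop_mul_norm_cpow
    (tendsto_mul_exp_neg_mul_sub hm _ _) (neg_ne_zero.mpr hd) _

theorem stmt_14 (α : ℂ) (hα : α ≠ 0) (a b m : ℝ) (ha : 0 < a) (hm : 0 < m)
    (hre : ((m : ℂ) / α).re > a) (c h₀ : ℂ)
    (hc : ∀ r : ℝ, 0 ≤ r → c ≠ (r : ℂ)) (hh₀ : ∀ r : ℝ, r ≤ 0 → h₀ ≠ (r : ℂ)) :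
    Filter.Tendsto
      (fun t : ℝ =>
        norm
          (Complex.exp ((t : ℂ) * ((m : ℂ) / α - ((a : ℂ) + (b : ℂ) * Complex.I))) *
            ((1 + ((a : ℂ) / c) * h₀) * ((Real.exp (-(m * t)) : ℝ) : ℂ) - ((a : ℂ) / c) * h₀) ^
              ((1 : ℂ) / α)))
      Filter.atTop Filter.atTop :=
  stmt_14_general α a b m ha hm hre c h₀ hc hh₀
end
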